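/- For every integer n ≥ 3, the n-dimensional alternating group network AN_n is an (n−1)-regular connected graph whose vertex connectivity equals n − 1; that is, every vertex of AN_n has exactly n − 1 neighbors, AN_n is connected, every set of at most n − 2 vertices fails to disconnect AN_n, and some set of n − 1 vertices disconnects AN_n (for n ≥ 4). -/

import Mathlib

open SimpleGraph

/-- Vertices of the alternating group network: even permutations of `{1,…,n}`
(modeled as permutations of `Fin n` with sign `1`). A permutation `p` is viewed
as the sequence `p₁p₂⋯p_n` where `p_j` (the symbol in position `j`) is `p ⟨j-1,_⟩`. -/
abbrev ANVertex (n : ℕ) : Type := {p : Equiv.Perm (Fin n) // Equiv.Perm.sign p = 1}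

/-- The adjacency relation of the `n`-dimensional alternating group network `AN_n`
(positions are 1-based in the informal description; position `j` is `⟨j-1,_⟩ : Fin n`). -/
def ANAdj (n : ℕ) (p q : Equiv.Perm (Fin n)) : Prop :=
  ∃ hn : 3 ≤ n,
    ((p ⟨0, by omega⟩ = q ⟨1, by omega⟩ ∧ p ⟨1, by omega⟩ = q ⟨2, by omega⟩ ∧
      p ⟨2, by omega⟩ = q ⟨0, by omega⟩ ∧ ∀ j : Fin n, 3 ≤ (j : ℕ) → p j = q j) ∨
     (p ⟨0, by omega⟩ = q ⟨2, by omega⟩ ∧ p ⟨1, by omega⟩ = q ⟨0, by omega⟩ ∧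
      p ⟨2, by omega⟩ = q ⟨1, by omega⟩ ∧ ∀ j : Fin n, 3 ≤ (j : ℕ) → p j = q j) ∨
     (∃ i : Fin n, 3 ≤ (i : ℕ) ∧ p ⟨0, by omega⟩ = q ⟨1, by omega⟩ ∧
      p ⟨1, by omega⟩ = q ⟨0, by omega⟩ ∧ p ⟨2, by omega⟩ = q i ∧ p i = q ⟨2, by omega⟩ ∧
      ∀ j : Fin n, 3 ≤ (j : ℕ) → j ≠ i → p j = q j))

/-- The `n`-dimensional alternating group network `AN_n`. -/
def AN (n : ℕ) : SimpleGraph (ANVertex n) where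
  Adj x y := ANAdj n x.1 y.1
  symm := by
    constructor
    rintro x y ⟨hn, h⟩
    refine ⟨hn, ?_⟩
    rcases h with ⟨h1, h2, h3, h4⟩ | ⟨h1, h2, h3, h4⟩ | ⟨i, hi, h1, h2, h3, h4, h5⟩
    · exact Or.inr (Or.inl ⟨h3.symm, h1.symm, h2.symm, fun j hj => (h4 j hj).symm⟩)
    · exact Or.inl ⟨h2.symm, h3.symm, h1.symm, fun j hj => (h4 j hj).symm⟩
    · exact Or.inr (Or.inr ⟨i, hi, h2.symm, h1.symm, h4.symm, h3.symm,
        fun j hj hji => (h5 j hj hji).symm⟩)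
  loopless := by
    constructor
    rintro x ⟨hn, ⟨h1, -⟩ | ⟨h1, -⟩ | ⟨i, hi, h1, -⟩⟩ <;>
      simpa [Fin.ext_iff] using x.1.injective h1

/-- The `ℓ`-component connectivity `κ_ℓ(G)`: the minimum number of vertices whose
removal from `G` results in a graph with at least `ℓ` connected components or a
graph with fewer than `ℓ` vertices. -/
noncomputable def componentConnectivity {V : Type*} [Fintype V] (G : SimpleGraph V)
    (l : ℕ) : ℕ :=
  sInf {k | ∃ F : Finset V, F.card = k ∧
    (l ≤ Nat.card ((G.induce (↑F : Set V)ᶜ).ConnectedComponent) ∨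
     Fintype.card V - F.card < l)}

/-!
`AN (m + 3)` is the Cayley graph of the alternating group on `Fin (m + 3)` for a generating set
`gens m` of `m + 2` elements, told apart by where they send position `2`; this gives regularity.

That deleting at most `m + 1` vertices leaves `AN (m + 3)` connected is proved by induction on
`m`, starting from the triangle `AN 3`. The vertices of `AN (m + 4)` with a given last symbol form
a class spanning a copy of `AN (m + 3)`, and the only edge leaving the class at `x` goes to
`cross x`, in the class of the symbol `x.1 pos2`. Given at most `m + 2` faults: if one class
contains `m + 2` of them it contains all, and every fault-free vertex escapes to the other,
fault-free, classes. Otherwise every class stays connected, and any two classes are joined by a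
fault-free cross edge, directly or through a third class, since a fault spoils only the one pair
of classes `crossPair` it lies on.

The neighbourhood of a vertex separates it from the rest, so the bound `n - 1` is attained.
-/

open Equiv Equiv.Perm Finset

theorem Sym2.exists_mk_notMem_of_card_add_two_le {α : Type*} [Fintype α] [DecidableEq α]
    {D : Finset (Sym2 α)} (hD : #D + 2 ≤ Fintype.card α) {s t : α} (hst : s ≠ t)
    (hmem : s(s, t) ∈ D) : ∃ r, r ≠ s ∧ r ≠ t ∧ s(s, r) ∉ D ∧ s(r, t) ∉ D := by
  by_contra! h
  -- each `r ∉ {s, t}` now puts its own pair `d r ∋ r` into `D`, and none of them is `s(s, t)`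
  let d r := if s(s, r) ∈ D then s(s, r) else s(r, t)
  have self_mem_d : ∀ r, r ∈ d r := by
    intro r
    by_cases hr : s(s, r) ∈ D <;> simp [d, hr]
  have mem_d : ∀ r x, x ∈ d r → x = s ∨ x = r ∨ x = t := by
    intro r x
    by_cases hr : s(s, r) ∈ D <;> simp only [d, hr, if_true, if_false, Sym2.mem_iff] <;> tauto
  have d_mem : ∀ r ∈ ({s, t}ᶜ : Finset α), d r ∈ D := by
    intro r hr
    simp only [mem_compl, mem_insert, mem_singleton, not_or] at hr
    by_cases hsr : s(s, r) ∈ D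
    · simp [d, hsr]
    · simpa [d, hsr] using h r hr.1 hr.2 hsr
  have hinj : Set.InjOn d ↑({s, t}ᶜ : Finset α) := by
    intro r hr r' _ e
    simp only [coe_compl, coe_insert, coe_singleton, Set.mem_compl_iff, Set.mem_insert_iff,
      Set.mem_singleton_iff, not_or] at hr
    have := mem_d r' r (e ▸ self_mem_d r)
    tauto
  have hnot : s(s, t) ∉ ({s, t}ᶜ : Finset α).image d := by
    simp only [mem_image, mem_compl, mem_insert, mem_singleton, not_or, not_exists, not_and]
    intro r hr e
    have := self_mem_d r
    rw [e, Sym2.mem_iff] at this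
    tauto
  have hsub : insert s(s, t) (({s, t}ᶜ : Finset α).image d) ⊆ D :=
    insert_subset hmem (image_subset_iff.2 d_mem)
  have := card_le_card hsub
  rw [card_insert_of_notMem hnot, card_image_of_injOn hinj, card_compl,
    card_pair hst] at this
  omega

theorem Finset.exists_notMem_of_card_lt {α : Type*} [Fintype α] {s : Finset α}
    (h : #s < Nat.card α) : ∃ x, x ∉ s := by
  by_contra! hs
  rw [Nat.card_eq_fintype_card, card_lt_iff_ne_univ] at h
  exact h (eq_univ_iff_forall.2 hs)

namespace SimpleGraph

variable {V W : Type*} {G : SimpleGraph V} {H : SimpleGraph W}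

def ConnectedAfterDeleting (G : SimpleGraph V) (k : ℕ) : Prop :=
  ∀ F : Finset V, #F ≤ k → (G.induce (↑F : Set V)ᶜ).Connected

theorem ConnectedAfterDeleting.connected {k : ℕ} (h : G.ConnectedAfterDeleting k) :
    G.Connected := by
  have h₀ := h ∅ (Nat.zero_le k)
  rw [Finset.coe_empty, Set.compl_empty] at h₀
  exact (induceUnivIso G).connected_iff.mp h₀

theorem Hom.reachable_induce_compl (f : G →g H) {F : Set W}
    (hG : (G.induce (f ⁻¹' F)ᶜ).Preconnected) {x y : W} (hx : x ∈ Set.range f)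
    (hy : y ∈ Set.range f) (hxF : x ∉ F) (hyF : y ∉ F) :
    (H.induce Fᶜ).Reachable ⟨x, hxF⟩ ⟨y, hyF⟩ := by
  obtain ⟨a, rfl⟩ := hx
  obtain ⟨b, rfl⟩ := hy
  let φ : G.induce (f ⁻¹' F)ᶜ →g H.induce Fᶜ := ⟨fun z => ⟨f z, z.2⟩, f.map_adj⟩
  exact (hG ⟨a, hxF⟩ ⟨b, hyF⟩).map φ

theorem not_connected_induce_compl_neighborSet {v w : V} (hwv : w ≠ v) (hw : ¬ G.Adj v w) :
    ¬ (G.induce (G.neighborSet v)ᶜ).Connected := by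
  intro hc
  obtain ⟨p⟩ := hc.preconnected ⟨v, G.loopless.irrefl v⟩ ⟨w, hw⟩
  cases p with
  | nil => exact hwv rfl
  | cons hadj _ => exact (Set.notMem_compl_iff.mpr hadj) (Subtype.property _)

end SimpleGraph

theorem Equiv.Perm.exists_extendDomain_eq {α β : Type*} {p : β → Prop} [DecidablePred p]
    (f : α ≃ Subtype p) {q : Perm β} (hq : ∀ b, ¬ p b → q b = b) :
    ∃ e : Perm α, e.extendDomain f = q := by
  refine ⟨f.permCongr.symm ((Perm.subtypeEquivSubtypePerm p).symm ⟨q, hq⟩),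
    Equiv.ext fun b => ?_⟩
  by_cases hb : p b
  · simp [extendDomain_apply_subtype _ _ hb, permCongr_apply]
  · rw [extendDomain_apply_not_subtype _ _ hb, hq b hb]

section extendLast

variable {n : ℕ}

def extendLast : Perm (Fin n) →* Perm (Fin (n + 1)) :=
  extendDomainHom (finSuccAboveEquiv (Fin.last n))

theorem extendLast_castSucc (p : Perm (Fin n)) (i : Fin n) :
    extendLast p i.castSucc = (p i).castSucc := by
  simpa [extendLast, finSuccAboveEquiv_apply] using
    extendDomain_apply_image p (finSuccAboveEquiv (Fin.last n)) i

theorem extendLast_last (p : Perm (Fin n)) : extendLast p (Fin.last n) = Fin.last n :=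
  extendDomain_apply_not_subtype _ _ (not_not.2 rfl)

theorem sign_extendLast (p : Perm (Fin n)) : sign (extendLast p) = sign p :=
  sign_extendDomain p _

theorem extendLast_injective : Function.Injective (extendLast (n := n)) :=
  extendDomainHom_injective _

theorem exists_extendLast_eq {q : Perm (Fin (n + 1))} (hq : q (Fin.last n) = Fin.last n) :
    ∃ p, extendLast p = q :=
  exists_extendDomain_eq _ fun b hb => by rw [not_not.1 hb, hq]

theorem extendLast_swap (a b : Fin n) :
    extendLast (swap a b) = swap a.castSucc b.castSucc := by
  ext x : 1
  induction x using Fin.lastCases with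
  | last =>
    rw [extendLast_last, swap_apply_of_ne_of_ne (Fin.castSucc_ne_last a).symm
      (Fin.castSucc_ne_last b).symm]
  | cast i => rw [extendLast_castSucc, (Fin.castSucc_injective n).swap_apply]

end extendLast

namespace AN

variable {m : ℕ}

def pos0 : Fin (m + 3) := ⟨0, by omega⟩
def pos1 : Fin (m + 3) := ⟨1, by omega⟩
def pos2 : Fin (m + 3) := ⟨2, by omega⟩

theorem eq_pos_or_three_le (x : Fin (m + 3)) :
    x = pos0 ∨ x = pos1 ∨ x = pos2 ∨ 3 ≤ (x : ℕ) := by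
  simp only [pos0, pos1, pos2, Fin.ext_iff]; omega

-- Right multiplication by `rot m`, `(rot m)⁻¹` and `tr i` realises the adjacency rules
-- (i), (ii) and (iii) respectively.
def rot (m : ℕ) : Perm (Fin (m + 3)) := swap pos0 pos2 * swap pos1 pos2

def tr (i : Fin (m + 3)) : Perm (Fin (m + 3)) := swap pos0 pos1 * swap pos2 i

theorem rot_pos0 : rot m pos0 = pos2 := by
  simp only [rot, mul_apply, swap_apply_def, Fin.ext_iff, pos0, pos1, pos2]
  split_ifs <;> simp_all
theorem rot_pos1 : rot m pos1 = pos0 := by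
  simp only [rot, mul_apply, swap_apply_def, Fin.ext_iff, pos0, pos1, pos2]
  split_ifs <;> simp_all
theorem rot_pos2 : rot m pos2 = pos1 := by
  simp only [rot, mul_apply, swap_apply_def, Fin.ext_iff, pos0, pos1, pos2]
  split_ifs <;> simp_all
theorem rot_inv_pos0 : (rot m)⁻¹ pos0 = pos1 := by rw [inv_eq_iff_eq, rot_pos1]
theorem rot_inv_pos1 : (rot m)⁻¹ pos1 = pos2 := by rw [inv_eq_iff_eq, rot_pos2]
theorem rot_inv_pos2 : (rot m)⁻¹ pos2 = pos0 := by rw [inv_eq_iff_eq, rot_pos0]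

theorem rot_apply_of_three_le {j : Fin (m + 3)} (hj : 3 ≤ (j : ℕ)) : rot m j = j := by
  simp only [rot, mul_apply, swap_apply_def, Fin.ext_iff, pos0, pos1, pos2]
  split_ifs <;> simp_all

theorem rot_inv_apply_of_three_le {j : Fin (m + 3)} (hj : 3 ≤ (j : ℕ)) :
    (rot m)⁻¹ j = j := by
  rw [inv_eq_iff_eq, rot_apply_of_three_le hj]

variable {i : Fin (m + 3)}

theorem tr_pos0 (hi : 3 ≤ (i : ℕ)) : tr i pos0 = pos1 := by
  simp only [tr, mul_apply, swap_apply_def, Fin.ext_iff, pos0, pos1, pos2]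
  split_ifs <;> simp_all
  omega
theorem tr_pos1 (hi : 3 ≤ (i : ℕ)) : tr i pos1 = pos0 := by
  simp only [tr, mul_apply, swap_apply_def, Fin.ext_iff, pos0, pos1, pos2]
  split_ifs <;> simp_all
  omega
theorem tr_pos2 (hi : 3 ≤ (i : ℕ)) : tr i pos2 = i := by
  simp only [tr, mul_apply, swap_apply_def, Fin.ext_iff, pos0, pos1, pos2]
  split_ifs <;> simp_all
theorem tr_self (hi : 3 ≤ (i : ℕ)) : tr i i = pos2 := by
  simp only [tr, mul_apply, swap_apply_def, Fin.ext_iff, pos0, pos1, pos2]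
  split_ifs <;> simp_all
theorem tr_apply_of_three_le {j : Fin (m + 3)} (hj : 3 ≤ (j : ℕ)) (hji : j ≠ i) :
    tr i j = j := by
  rw [Ne, Fin.ext_iff] at hji
  simp only [tr, mul_apply, swap_apply_def, Fin.ext_iff, pos0, pos1, pos2]
  split_ifs <;> simp_all

theorem eq_mul_rot_iff {p q : Perm (Fin (m + 3))} : q = p * rot m ↔
    p pos0 = q pos1 ∧ p pos1 = q pos2 ∧ p pos2 = q pos0 ∧
      ∀ j : Fin (m + 3), 3 ≤ (j : ℕ) → p j = q j := by
  constructor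
  · rintro rfl
    simp only [mul_apply, rot_pos0, rot_pos1, rot_pos2]
    exact ⟨trivial, trivial, trivial, fun j hj => by rw [rot_apply_of_three_le hj]⟩
  · rintro ⟨h0, h1, h2, h⟩
    ext x : 1
    rcases eq_pos_or_three_le x with rfl | rfl | rfl | hx
    · rw [mul_apply, rot_pos0, h2]
    · rw [mul_apply, rot_pos1, h0]
    · rw [mul_apply, rot_pos2, h1]
    · rw [mul_apply, rot_apply_of_three_le hx, h x hx]

theorem eq_mul_rot_inv_iff {p q : Perm (Fin (m + 3))} : q = p * (rot m)⁻¹ ↔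
    p pos0 = q pos2 ∧ p pos1 = q pos0 ∧ p pos2 = q pos1 ∧
      ∀ j : Fin (m + 3), 3 ≤ (j : ℕ) → p j = q j := by
  constructor
  · rintro rfl
    simp only [mul_apply, rot_inv_pos0, rot_inv_pos1, rot_inv_pos2]
    exact ⟨trivial, trivial, trivial, fun j hj => by rw [rot_inv_apply_of_three_le hj]⟩
  · rintro ⟨h0, h1, h2, h⟩
    ext x : 1
    rcases eq_pos_or_three_le x with rfl | rfl | rfl | hx
    · rw [mul_apply, rot_inv_pos0, h1]
    · rw [mul_apply, rot_inv_pos1, h2]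
    · rw [mul_apply, rot_inv_pos2, h0]
    · rw [mul_apply, rot_inv_apply_of_three_le hx, h x hx]

theorem eq_mul_tr_iff {p q : Perm (Fin (m + 3))} (hi : 3 ≤ (i : ℕ)) : q = p * tr i ↔
    p pos0 = q pos1 ∧ p pos1 = q pos0 ∧ p pos2 = q i ∧ p i = q pos2 ∧
      ∀ j : Fin (m + 3), 3 ≤ (j : ℕ) → j ≠ i → p j = q j := by
  constructor
  · rintro rfl
    simp only [mul_apply, tr_pos0 hi, tr_pos1 hi, tr_pos2 hi, tr_self hi]
    exact ⟨trivial, trivial, trivial, trivial,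
      fun j hj hji => by rw [tr_apply_of_three_le hj hji]⟩
  · rintro ⟨h0, h1, h2, h3, h⟩
    ext x : 1
    rcases eq_pos_or_three_le x with rfl | rfl | rfl | hx
    · rw [mul_apply, tr_pos0 hi, h1]
    · rw [mul_apply, tr_pos1 hi, h0]
    · rw [mul_apply, tr_pos2 hi, h3]
    · rcases eq_or_ne x i with rfl | hxi
      · rw [mul_apply, tr_self hi, h2]
      · rw [mul_apply, tr_apply_of_three_le hx hxi, h x hx hxi]

def gens (m : ℕ) : Set (Perm (Fin (m + 3))) :=
  {rot m, (rot m)⁻¹} ∪ tr '' {i | 3 ≤ (i : ℕ)}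

theorem adj_iff {x y : ANVertex (m + 3)} :
    (AN (m + 3)).Adj x y ↔ ∃ g ∈ gens m, y.1 = x.1 * g := by
  change ANAdj (m + 3) x.1 y.1 ↔ _
  constructor
  · rintro ⟨_, h | h | ⟨i, hi, h⟩⟩
    · exact ⟨_, .inl (.inl rfl), eq_mul_rot_iff.2 h⟩
    · exact ⟨_, .inl (.inr rfl), eq_mul_rot_inv_iff.2 h⟩
    · exact ⟨_, .inr ⟨i, hi, rfl⟩, (eq_mul_tr_iff hi).2 h⟩
  · rintro ⟨g, ((rfl | rfl) | ⟨i, hi, rfl⟩), h⟩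
    · exact ⟨by omega, .inl (eq_mul_rot_iff.1 h)⟩
    · exact ⟨by omega, .inr (.inl (eq_mul_rot_inv_iff.1 h))⟩
    · exact ⟨by omega, .inr (.inr ⟨i, hi, (eq_mul_tr_iff hi).1 h⟩)⟩

theorem sign_of_mem_gens {g : Perm (Fin (m + 3))} (hg : g ∈ gens m) : sign g = 1 := by
  rcases hg with (rfl | rfl) | ⟨i, hi, rfl⟩
  · simp [rot, pos0, pos1, pos2, Fin.ext_iff]
  · simp [rot, pos0, pos1, pos2, Fin.ext_iff]
  · rw [tr, map_mul, sign_swap (by simp [pos0, pos1]),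
      sign_swap (fun h => by simp [← h, pos2] at hi)]
    rfl

theorem val_image_neighborSet (v : ANVertex (m + 3)) :
    Subtype.val '' (AN (m + 3)).neighborSet v = (v.1 * ·) '' gens m := by
  ext p
  constructor
  · rintro ⟨w, hw, rfl⟩
    obtain ⟨g, hg, hwg⟩ := adj_iff.1 hw
    exact ⟨g, hg, hwg.symm⟩
  · rintro ⟨g, hg, rfl⟩
    refine ⟨⟨v.1 * g, by rw [map_mul, v.2, sign_of_mem_gens hg, one_mul]⟩, ?_, rfl⟩
    exact adj_iff.2 ⟨g, hg, rfl⟩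

theorem image_gens_apply_pos2 : (· pos2) '' gens m = {pos2}ᶜ := by
  ext x
  simp only [gens, Set.image_union, Set.image_pair, Set.mem_union, Set.mem_insert_iff,
    Set.mem_singleton_iff, Set.image_image, Set.mem_image, Set.mem_ofPred_eq, Set.mem_compl_iff,
    rot_pos2, rot_inv_pos2]
  constructor
  · rintro ((rfl | rfl) | ⟨i, hi, rfl⟩)
    · simp [pos1, pos2]
    · simp [pos0, pos2]
    · rw [tr_pos2 hi]
      rintro rfl
      simp [pos2] at hi
  · intro hx
    rcases eq_pos_or_three_le x with rfl | rfl | rfl | hx3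
    · exact .inl (.inr rfl)
    · exact .inl (.inl rfl)
    · exact absurd rfl hx
    · exact .inr ⟨x, hx3, tr_pos2 hx3⟩

theorem injOn_gens_apply_pos2 : Set.InjOn (· pos2) (gens m) := by
  rintro g ((rfl | rfl) | ⟨i, hi, rfl⟩) h ((rfl | rfl) | ⟨j, hj, rfl⟩) e <;>
    simp_all [rot_pos2, rot_inv_pos2, tr_pos2, pos0, pos1] <;>
    (subst e; simp at hj)

theorem ncard_gens : (gens m).ncard = m + 2 := by
  rw [← injOn_gens_apply_pos2.ncard_image, image_gens_apply_pos2, Set.ncard_compl,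
    Set.ncard_singleton, Nat.card_eq_fintype_card, Fintype.card_fin]
  rfl

theorem ncard_neighborSet (v : ANVertex (m + 3)) : ((AN (m + 3)).neighborSet v).ncard = m + 2 := by
  rw [← Set.ncard_image_of_injective _ Subtype.val_injective, val_image_neighborSet,
    Set.ncard_image_of_injective _ (mul_right_injective v.1), ncard_gens]

theorem extendLast_rot : extendLast (rot m) = rot (m + 1) := by
  rw [rot, map_mul, extendLast_swap, extendLast_swap]
  rfl

theorem extendLast_tr (i : Fin (m + 3)) : extendLast (tr i) = tr i.castSucc := by
  rw [tr, map_mul, extendLast_swap, extendLast_swap]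
  rfl

theorem extendLast_mem_gens {g : Perm (Fin (m + 3))} (hg : g ∈ gens m) :
    extendLast g ∈ gens (m + 1) := by
  rcases hg with (rfl | rfl) | ⟨i, hi, rfl⟩
  · exact .inl (.inl extendLast_rot)
  · exact .inl (.inr (by rw [map_inv, extendLast_rot]; rfl))
  · exact .inr ⟨i.castSucc, hi, (extendLast_tr i).symm⟩

def lastSymbol (x : ANVertex (m + 4)) : Fin (m + 4) := x.1 (Fin.last (m + 3))

def liftAt (u : ANVertex (m + 4)) : AN (m + 3) →g AN (m + 4) where
  toFun x := ⟨u.1 * extendLast x.1, by rw [map_mul, u.2, sign_extendLast, x.2, one_mul]⟩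
  map_rel' {x y} h := by
    obtain ⟨g, hg, hxy⟩ := adj_iff.1 h
    refine adj_iff.2 ⟨extendLast g, extendLast_mem_gens hg, ?_⟩
    simp only [hxy, map_mul, mul_assoc]

theorem liftAt_injective (u : ANVertex (m + 4)) : Function.Injective (liftAt u) := by
  intro x y h
  exact Subtype.ext (extendLast_injective (mul_left_cancel (congrArg Subtype.val h)))

theorem lastSymbol_liftAt (u : ANVertex (m + 4)) (x : ANVertex (m + 3)) :
    lastSymbol (liftAt u x) = lastSymbol u := by
  simp [lastSymbol, liftAt, mul_apply, extendLast_last]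

theorem range_liftAt (u : ANVertex (m + 4)) :
    Set.range (liftAt u) = {v | lastSymbol v = lastSymbol u} := by
  ext v
  constructor
  · rintro ⟨x, rfl⟩
    exact lastSymbol_liftAt u x
  · intro hv
    obtain ⟨p, hp⟩ := exists_extendLast_eq (q := u.1⁻¹ * v.1)
      (by rw [mul_apply, inv_eq_iff_eq]; exact hv)
    have hsign : sign p = 1 := by
      rw [← sign_extendLast, hp, map_mul, map_inv, u.2, v.2, inv_one, one_mul]
    exact ⟨⟨p, hsign⟩, Subtype.ext (by simp [liftAt, hp])⟩

theorem reachable_of_lastSymbol_eq (hAN : (AN (m + 3)).ConnectedAfterDeleting (m + 1))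
    {F : Finset (ANVertex (m + 4))} {s : Fin (m + 4)} (hF : #{x ∈ F | lastSymbol x = s} ≤ m + 1)
    {u v : ANVertex (m + 4)} (hu : u ∉ F) (hv : v ∉ F) (hus : lastSymbol u = s)
    (hvs : lastSymbol v = s) :
    ((AN (m + 4)).induce (↑F : Set (ANVertex (m + 4)))ᶜ).Reachable ⟨u, hu⟩ ⟨v, hv⟩ := by
  subst hus
  have hinj := (liftAt_injective u).injOn (s := liftAt u ⁻¹' ↑F)
  have hcard : #(F.preimage (liftAt u) hinj) ≤ m + 1 := by
    refine (card_le_card_of_injOn (liftAt u) (fun x hx => ?_) (liftAt_injective u).injOn).trans hF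
    rw [mem_coe, mem_preimage] at hx
    exact mem_filter.2 ⟨hx, lastSymbol_liftAt u x⟩
  have hconn := (hAN _ hcard).preconnected
  rw [coe_preimage] at hconn
  exact (liftAt u).reachable_induce_compl hconn (by rw [range_liftAt]; rfl)
    (by rw [range_liftAt]; exact hvs) hu hv

theorem tr_last_mem_gens : tr (Fin.last (m + 3)) ∈ gens (m + 1) :=
  .inr ⟨_, by simp, rfl⟩

def cross (x : ANVertex (m + 4)) : ANVertex (m + 4) :=
  ⟨x.1 * tr (Fin.last (m + 3)),
    by rw [map_mul, x.2, sign_of_mem_gens tr_last_mem_gens, one_mul]⟩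

theorem adj_cross (x : ANVertex (m + 4)) : (AN (m + 4)).Adj x (cross x) :=
  adj_iff.2 ⟨_, tr_last_mem_gens, rfl⟩

theorem lastSymbol_cross (x : ANVertex (m + 4)) : lastSymbol (cross x) = x.1 pos2 := by
  rw [lastSymbol, cross, mul_apply, tr_self (by simp)]

theorem cross_pos2 (x : ANVertex (m + 4)) : (cross x).1 pos2 = lastSymbol x := by
  rw [lastSymbol, cross, mul_apply, tr_pos2 (by simp)]

def crossPair (x : ANVertex (m + 4)) : Sym2 (Fin (m + 4)) := s(lastSymbol x, x.1 pos2)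

theorem crossPair_cross (x : ANVertex (m + 4)) : crossPair (cross x) = crossPair x := by
  rw [crossPair, crossPair, lastSymbol_cross, cross_pos2, Sym2.eq_swap]

theorem exists_apply_eq_apply_eq {a b c d : Fin (m + 4)} (hab : a ≠ b) (hcd : c ≠ d) :
    ∃ x : ANVertex (m + 4), x.1 a = c ∧ x.1 b = d := by
  have := alternatingGroup.isMultiplyPretransitive (Fin (m + 4))
  have h2 : MulAction.IsMultiplyPretransitive (alternatingGroup (Fin (m + 4))) (Fin (m + 4)) 2 :=
    MulAction.isMultiplyPretransitive_of_le (n := Nat.card (Fin (m + 4)) - 2) (by simp) (by simp)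
  obtain ⟨g, hga, hgb⟩ := MulAction.is_two_pretransitive_iff.1 h2 hab hcd
  exact ⟨⟨g.1, mem_alternatingGroup.1 g.2⟩, hga, hgb⟩

section Faults

variable {F : Finset (ANVertex (m + 4))}

def Linked (F : Finset (ANVertex (m + 4))) (s t : Fin (m + 4)) : Prop :=
  ∃ x, x ∉ F ∧ cross x ∉ F ∧ lastSymbol x = s ∧ x.1 pos2 = t

theorem linked_of_notMem {s t : Fin (m + 4)} (hst : s ≠ t) (h : s(s, t) ∉ F.image crossPair) :
    Linked F s t := by
  obtain ⟨x, hxs, hxt⟩ := exists_apply_eq_apply_eq (a := Fin.last (m + 3)) (b := pos2)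
    (by simp [pos2, Fin.ext_iff]) hst
  have hx : crossPair x = s(s, t) := by rw [crossPair, lastSymbol, hxs, hxt]
  refine ⟨x, fun hxF => h (mem_image.2 ⟨x, hxF, hx⟩),
    fun hcF => h (mem_image.2 ⟨cross x, hcF, by rw [crossPair_cross, hx]⟩), hxs, hxt⟩

theorem reachable_of_linked (hAN : (AN (m + 3)).ConnectedAfterDeleting (m + 1))
    {s t : Fin (m + 4)} (hs : #{x ∈ F | lastSymbol x = s} ≤ m + 1)
    (ht : #{x ∈ F | lastSymbol x = t} ≤ m + 1) (hlink : Linked F s t)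
    {u v : ANVertex (m + 4)} (hu : u ∉ F) (hv : v ∉ F) (hus : lastSymbol u = s)
    (hvt : lastSymbol v = t) :
    ((AN (m + 4)).induce (↑F : Set (ANVertex (m + 4)))ᶜ).Reachable ⟨u, hu⟩ ⟨v, hv⟩ := by
  obtain ⟨x, hx, hcx, hxs, hxt⟩ := hlink
  have hcross : ((AN (m + 4)).induce (↑F : Set _)ᶜ).Adj ⟨x, hx⟩ ⟨cross x, hcx⟩ :=
    adj_cross x
  exact ((reachable_of_lastSymbol_eq hAN hs hu hx hus hxs).trans hcross.reachable).trans
    (reachable_of_lastSymbol_eq hAN ht hcx hv (by rw [lastSymbol_cross, hxt]) hvt)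

theorem reachable_of_forall_card_filter_le (hAN : (AN (m + 3)).ConnectedAfterDeleting (m + 1))
    (hF : #F ≤ m + 2) (hgood : ∀ s, #{x ∈ F | lastSymbol x = s} ≤ m + 1)
    {u v : ANVertex (m + 4)} (hu : u ∉ F) (hv : v ∉ F) :
    ((AN (m + 4)).induce (↑F : Set (ANVertex (m + 4)))ᶜ).Reachable ⟨u, hu⟩ ⟨v, hv⟩ := by
  rcases eq_or_ne (lastSymbol u) (lastSymbol v) with huv | huv
  · exact reachable_of_lastSymbol_eq hAN (hgood _) hu hv huv rfl
  by_cases hD : s(lastSymbol u, lastSymbol v) ∈ F.image crossPair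
  · have hcard : #(F.image crossPair) + 2 ≤ Fintype.card (Fin (m + 4)) := by
      rw [Fintype.card_fin]
      exact (Nat.add_le_add_right (card_image_le.trans hF) 2)
    obtain ⟨r, hru, hrv, hur, hrv'⟩ := Sym2.exists_mk_notMem_of_card_add_two_le hcard huv hD
    obtain ⟨x, hx, hcx, hxu, hxr⟩ := linked_of_notMem (Ne.symm hru) hur
    exact (reachable_of_linked hAN (hgood _) (hgood _) ⟨x, hx, hcx, hxu, hxr⟩ hu hcx rfl
      (by rw [lastSymbol_cross, hxr])).trans
      (reachable_of_linked hAN (hgood _) (hgood _) (linked_of_notMem hrv hrv') hcx hv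
        (by rw [lastSymbol_cross, hxr]) rfl)
  · exact reachable_of_linked hAN (hgood _) (hgood _) (linked_of_notMem huv hD) hu hv rfl rfl

theorem reachable_of_forall_mem_lastSymbol_eq (hAN : (AN (m + 3)).ConnectedAfterDeleting (m + 1))
    {s₀ : Fin (m + 4)} (hF : ∀ x ∈ F, lastSymbol x = s₀) {u v : ANVertex (m + 4)}
    (hu : u ∉ F) (hv : v ∉ F) :
    ((AN (m + 4)).induce (↑F : Set (ANVertex (m + 4)))ᶜ).Reachable ⟨u, hu⟩ ⟨v, hv⟩ := by
  have hgood : ∀ t ≠ s₀, #{x ∈ F | lastSymbol x = t} ≤ m + 1 := fun t ht => by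
    rw [filter_eq_empty_iff.2 fun x hx hxt => ht (hxt.symm.trans (hF x hx)), card_empty]
    omega
  have escape : ∀ w (hw : w ∉ F), ∃ w' : ANVertex (m + 4), ∃ hw' : w' ∉ F, lastSymbol w' ≠ s₀ ∧
      ((AN (m + 4)).induce (↑F : Set _)ᶜ).Reachable ⟨w, hw⟩ ⟨w', hw'⟩ := by
    intro w hw
    by_cases hws : lastSymbol w = s₀
    · have hc : lastSymbol (cross w) ≠ s₀ := by
        rw [lastSymbol_cross, ← hws, lastSymbol, Ne, w.1.injective.eq_iff]
        simp [pos2, Fin.ext_iff]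
      exact ⟨cross w, fun h => hc (hF _ h), hc,
        Adj.reachable (G := (AN (m + 4)).induce _) (adj_cross w)⟩
    · exact ⟨w, hw, hws, .rfl⟩
  obtain ⟨u', hu', hus, hu⟩ := escape u hu
  obtain ⟨v', hv', hvs, hv⟩ := escape v hv
  refine (hu.trans ?_).trans hv.symm
  rcases eq_or_ne (lastSymbol u') (lastSymbol v') with huv | huv
  · exact reachable_of_lastSymbol_eq hAN (hgood _ hus) hu' hv' rfl huv.symm
  refine reachable_of_linked hAN (hgood _ hus) (hgood _ hvs) (linked_of_notMem huv ?_) hu' hv'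
    rfl rfl
  simp only [mem_image, not_exists, not_and]
  intro x hx hxuv
  have := Sym2.mem_mk_left (lastSymbol x) (x.1 pos2)
  rw [crossPair] at hxuv
  rw [hxuv, hF x hx, Sym2.mem_iff] at this
  exact this.elim (hus ∘ Eq.symm) (hvs ∘ Eq.symm)

end Faults

theorem two_mul_card_ANVertex (n : ℕ) (hn : 2 ≤ n) :
    2 * Nat.card (ANVertex n) = n.factorial := by
  have : Nontrivial (Fin n) := Fin.nontrivial_iff_two_le.2 hn
  rw [Nat.card_congr (Equiv.subtypeEquivRight fun p => mem_alternatingGroup.symm),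
    Nat.card_eq_fintype_card, two_mul_card_alternatingGroup, Fintype.card_perm, Fintype.card_fin]

theorem lt_card_ANVertex : m + 4 < Nat.card (ANVertex (m + 4)) := by
  have h := two_mul_card_ANVertex (m + 4) (by omega)
  have h3 : 3 ≤ (m + 3).factorial := (Nat.self_le_factorial _).trans' (by omega)
  rw [Nat.factorial_succ] at h
  nlinarith

theorem connectedAfterDeleting_succ (hAN : (AN (m + 3)).ConnectedAfterDeleting (m + 1)) :
    (AN (m + 4)).ConnectedAfterDeleting (m + 2) := by
  intro F hF
  obtain ⟨w, hw⟩ := exists_notMem_of_card_lt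
    (hF.trans_lt (by have := lt_card_ANVertex (m := m); omega))
  have : Nonempty ↥(↑F : Set (ANVertex (m + 4)))ᶜ := ⟨⟨w, hw⟩⟩
  refine ⟨fun ⟨u, hu⟩ ⟨v, hv⟩ => ?_⟩
  by_cases hgood : ∀ s, #{x ∈ F | lastSymbol x = s} ≤ m + 1
  · exact reachable_of_forall_card_filter_le hAN hF hgood hu hv
  · obtain ⟨s₀, hs₀⟩ := not_forall.1 hgood
    have hF₀ : {x ∈ F | lastSymbol x = s₀} = F :=
      eq_of_subset_of_card_le (filter_subset _ _) (by omega)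
    exact reachable_of_forall_mem_lastSymbol_eq hAN (filter_eq_self.1 hF₀) hu hv

theorem card_ANVertex_three : Nat.card (ANVertex 3) = 3 := by
  have : 2 * Nat.card (ANVertex 3) = 6 := two_mul_card_ANVertex 3 (by omega)
  omega

theorem three_adj_of_ne {x y : ANVertex 3} (hxy : x ≠ y) : (AN 3).Adj x y := by
  have hN : (AN 3).neighborSet x = {x}ᶜ := by
    refine Set.eq_of_subset_of_ncard_le (fun y hy => (AN 3).ne_of_adj hy |>.symm) ?_
    rw [Set.ncard_compl, Set.ncard_singleton, card_ANVertex_three, ncard_neighborSet (m := 0)]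
  exact (hN ▸ hxy.symm : y ∈ (AN 3).neighborSet x)

theorem connectedAfterDeleting_three : (AN 3).ConnectedAfterDeleting 1 := by
  intro F hF
  obtain ⟨w, hw⟩ := exists_notMem_of_card_lt (s := F) (by rw [card_ANVertex_three]; omega)
  have : Nonempty ↥(↑F : Set (ANVertex 3))ᶜ := ⟨⟨w, hw⟩⟩
  refine ⟨fun ⟨u, hu⟩ ⟨v, hv⟩ => ?_⟩
  rcases eq_or_ne u v with rfl | huv
  · rfl
  · exact Adj.reachable (G := (AN 3).induce _) (three_adj_of_ne huv)

theorem connectedAfterDeleting : ∀ m, (AN (m + 3)).ConnectedAfterDeleting (m + 1)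
  | 0 => connectedAfterDeleting_three
  | m + 1 => connectedAfterDeleting_succ (connectedAfterDeleting m)

theorem exists_card_eq_not_connected :
    ∃ F : Finset (ANVertex (m + 4)), #F = m + 3 ∧
      ¬ ((AN (m + 4)).induce (↑F : Set (ANVertex (m + 4)))ᶜ).Connected := by
  classical
  let v : ANVertex (m + 4) := ⟨1, map_one _⟩
  let N := ((AN (m + 4)).neighborSet v).toFinset
  have hN : #N = m + 3 := by
    rw [← Set.ncard_eq_toFinset_card', ncard_neighborSet (m := m + 1)]
  obtain ⟨w, hw⟩ := exists_notMem_of_card_lt ((card_insert_le v N).trans_lt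
    (by rw [hN]; exact lt_card_ANVertex))
  rw [mem_insert, not_or, Set.mem_toFinset] at hw
  refine ⟨N, hN, ?_⟩
  rw [Set.coe_toFinset]
  exact not_connected_induce_compl_neighborSet hw.1 hw.2

end AN

/-- For `n ≥ 3`, `AN_n` is an `(n−1)`-regular connected graph with vertex
connectivity `n − 1`: every vertex has exactly `n − 1` neighbors, `AN_n` is
connected, removing at most `n − 2` vertices never disconnects it, and (for
`n ≥ 4`) some set of `n − 1` vertices disconnects it. -/
theorem AN_regular_and_connectivity (n : ℕ) (hn : 3 ≤ n) :
    (∀ v : ANVertex n, ((AN n).neighborSet v).ncard = n - 1) ∧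
    (AN n).Connected ∧
    (∀ F : Finset (ANVertex n), F.card ≤ n - 2 →
      ((AN n).induce (↑F : Set (ANVertex n))ᶜ).Connected) ∧
    (4 ≤ n → ∃ F : Finset (ANVertex n), F.card = n - 1 ∧
      ¬ ((AN n).induce (↑F : Set (ANVertex n))ᶜ).Connected) := by
  obtain ⟨m, rfl⟩ : ∃ m, n = m + 3 := ⟨n - 3, by omega⟩
  have hconn := AN.connectedAfterDeleting m
  refine ⟨AN.ncard_neighborSet, hconn.connected, hconn, fun h4 => ?_⟩
  obtain ⟨k, rfl⟩ : ∃ k, m = k + 1 := ⟨m - 1, by omega⟩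
  exact AN.exists_card_eq_not_connected
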